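/- arXiv:2410.13208 — 5 statements merged into one kernel-verified Lean document; each statement's English description precedes it below -/
import Mathlib

section
/- For any odd integer a and any integer l > 1, the quadratic Gauss sum ∑_{k=1}^{2^l} e(a k²/2^l) equals 2^{(l+1)/2}·e(a/8) if l is odd, and 2^{l/2}·(1 + e(a/4)) if l is even, where e(x) = exp(2πix). -/
open Complex

noncomputable section

/-- `e(x) = exp(2πix)`. -/
def eC (x : ℂ) : ℂ := Complex.exp (2 * Real.pi * Complex.I * x)

open Finset
lemma eC_add (x y : ℂ) : eC (x + y) = eC x * eC y := by
  simp [eC, mul_add, Complex.exp_add]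
lemma eC_int (n : ℤ) : eC n = 1 := by
  rw [eC, mul_comm]; exact Complex.exp_int_mul_two_pi_mul_I n
lemma eC_add_int (x : ℂ) (n : ℤ) : eC (x + n) = eC x := by
  rw [eC_add, eC_int, mul_one]
lemma eC_int_div_two {n : ℤ} (hn : Odd n) : eC ((n : ℂ) / 2) = -1 := by
  have : eC ((n : ℂ) / 2) = Complex.exp (Real.pi * Complex.I) ^ n := by
    rw [eC, ← Complex.exp_int_mul]; ring_nf
  rw [this, Complex.exp_pi_mul_I, hn.neg_one_zpow]
lemma sum_range_add' (f : ℕ → ℂ) (m n : ℕ) :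
    ∑ k ∈ range (m+n), f k = ∑ k ∈ range m, f k + ∑ k ∈ range n, f (m+k) := by
  induction n with
  | zero => simp
  | succ n ih => rw [← add_assoc, sum_range_succ, sum_range_succ, ih, add_assoc]
lemma sum_range_two_mul' (f : ℕ → ℂ) (n : ℕ) :
    ∑ k ∈ range (2*n), f k = ∑ j ∈ range n, (f (2*j) + f (2*j+1)) := by
  induction n with
  | zero => simp
  | succ n ih =>
    rw [Nat.mul_succ, sum_range_succ, sum_range_succ, sum_range_succ, ih, add_assoc]
def G (a : ℤ) (l : ℕ) : ℂ := ∑ k ∈ range (2 ^ l), eC ((a : ℂ) * (k : ℂ) ^ 2 / 2 ^ l)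

lemma G_rec (a : ℤ) (ha : Odd a) (n : ℕ) : G a (n+4) = 2 * G a (n+2) := by
  set f : ℕ → ℂ := fun k => eC ((a:ℂ) * (k:ℂ)^2 / 2^(n+4)) with hf
  have h2 : (2:ℂ) ^ (n+4) ≠ 0 := pow_ne_zero _ two_ne_zero
  have hper : ∀ k : ℕ, f (2^(n+3) + k) = f k := by
    intro k
    have key : (a:ℂ) * ((2^(n+3)+k : ℕ):ℂ)^2 / 2^(n+4)
        = (a:ℂ) * (k:ℂ)^2 / 2^(n+4) + ((a*k + a*2^(n+2) : ℤ):ℂ) := by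
      push_cast; field_simp; ring
    show eC _ = eC _
    rw [key, eC_add_int]
  have hneg : ∀ j : ℕ, f (2*(2^(n+1)+j)+1) = - f (2*j+1) := by
    intro j
    have key : (a:ℂ) * ((2*(2^(n+1)+j)+1 : ℕ):ℂ)^2 / 2^(n+4)
        = (a:ℂ)*((2*j+1:ℕ):ℂ)^2 / 2^(n+4) + ((a*(2*(j:ℤ)+1) : ℤ):ℂ)/2 + ((a*2^n : ℤ):ℂ) := by
      push_cast; field_simp; ring
    show eC _ = - eC _
    rw [key, eC_add_int, eC_add, eC_int_div_two (ha.mul (odd_two_mul_add_one (j:ℤ))), mul_neg_one]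
  have heven : ∀ j : ℕ, f (2*j) = eC ((a:ℂ) * (j:ℂ)^2 / 2^(n+2)) := by
    intro j
    show eC _ = eC _
    congr 1
    have h2' : (2:ℂ) ^ (n+2) ≠ 0 := pow_ne_zero _ two_ne_zero
    push_cast; field_simp; ring
  have hodd : ∑ j ∈ range (2^(n+2)), f (2*j+1) = 0 := by
    have : (2:ℕ)^(n+2) = 2^(n+1) + 2^(n+1) := by ring
    rw [this, sum_range_add' (fun j => f (2*j+1)) (2^(n+1)) (2^(n+1))]
    simp only [hneg]
    simp
  have hsplit : G a (n+4) = 2 * ∑ k ∈ range (2^(n+3)), f k := by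
    have : (2:ℕ)^(n+4) = 2^(n+3) + 2^(n+3) := by ring
    rw [G, show (∑ k ∈ range (2 ^ (n+4)), eC ((a : ℂ) * (k : ℂ) ^ 2 / 2 ^ (n+4)))
        = ∑ k ∈ range (2^(n+4)), f k from rfl, this, sum_range_add' f]
    simp only [hper]; ring
  rw [hsplit, show (2:ℕ)^(n+3) = 2 * 2^(n+2) by ring, sum_range_two_mul' f,
    Finset.sum_add_distrib, hodd, add_zero]
  congr 1
  rw [G]
  exact Finset.sum_congr rfl fun j _ => heven j

lemma eC_zero : eC 0 = 1 := by simpa using eC_int 0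

lemma term_mod (a : ℤ) (l : ℕ) (k : ℕ) :
    eC ((a:ℂ)*(k:ℂ)^2/2^l) = eC ((a:ℂ)*((k^2 % 2^l : ℕ):ℂ)/2^l) := by
  have h2 : (2:ℂ)^l ≠ 0 := pow_ne_zero _ two_ne_zero
  have hnat : (k^2 % 2^l) + 2^l * (k^2 / 2^l) = k^2 := Nat.mod_add_div _ _
  set r := k^2 % 2^l with hr
  set q := k^2 / 2^l with hq
  have hC : (r:ℂ) + 2^l * (q:ℂ) = (k:ℂ)^2 := by
    exact_mod_cast congrArg (Nat.cast : ℕ → ℂ) hnat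
  rw [show (a:ℂ)*(k:ℂ)^2/2^l = (a:ℂ)*(r:ℂ)/2^l + ((a*q : ℤ):ℂ) from ?_, eC_add_int]
  push_cast
  field_simp
  linear_combination (-(a:ℂ)) * hC

lemma G_two (a : ℤ) : G a 2 = 2*(1+eC ((a:ℂ)/4)) := by
  rw [G, show (2:ℕ)^2 = 4 from rfl]
  rw [Finset.sum_range_succ, Finset.sum_range_succ, Finset.sum_range_succ,
    Finset.sum_range_succ, Finset.sum_range_zero]
  rw [term_mod a 2 0, term_mod a 2 1, term_mod a 2 2, term_mod a 2 3]
  norm_num [eC_zero]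
  ring

lemma G_three (a : ℤ) (ha : Odd a) : G a 3 = 4 * eC ((a:ℂ)/8) := by
  have h2 : eC ((a:ℂ)*4/8) = -1 := by
    rw [show (a:ℂ)*4/8 = (a:ℂ)/2 by ring]
    exact eC_int_div_two ha
  rw [G, show (2:ℕ)^3 = 8 from rfl]
  rw [Finset.sum_range_succ, Finset.sum_range_succ, Finset.sum_range_succ,
    Finset.sum_range_succ, Finset.sum_range_succ, Finset.sum_range_succ,
    Finset.sum_range_succ, Finset.sum_range_succ, Finset.sum_range_zero]
  rw [term_mod a 3 0, term_mod a 3 1, term_mod a 3 2, term_mod a 3 3, term_mod a 3 4,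
    term_mod a 3 5, term_mod a 3 6, term_mod a 3 7]
  norm_num [eC_zero]
  rw [h2]
  ring

lemma sqrt2_sq : ((Real.sqrt 2 : ℝ) : ℂ)^2 = 2 := by
  rw [← Complex.ofReal_pow, Real.sq_sqrt (by norm_num : (0:ℝ) ≤ 2)]
  norm_num

def P (a : ℤ) (l : ℕ) : Prop :=
  (Odd l → G a l = ((Real.sqrt 2 : ℝ) : ℂ)^(l+1) * eC ((a:ℂ)/8)) ∧
  (Even l → G a l = 2^(l/2) * (1 + eC ((a:ℂ)/4)))

lemma main (a : ℤ) (ha : Odd a) : ∀ n : ℕ, P a (n+2) ∧ P a (n+3) := by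
  intro n
  induction n with
  | zero =>
    refine ⟨⟨fun h => absurd h (by decide), fun _ => ?_⟩,
            ⟨fun _ => ?_, fun h => absurd h (by decide)⟩⟩
    · rw [G_two]; norm_num
    · rw [G_three a ha, show (0:ℕ)+3+1 = 2*2 from rfl, pow_mul, sqrt2_sq]
      norm_num
  | succ n ih =>
    refine ⟨ih.2, ?_, ?_⟩
    · intro h
      have h2 : Odd (n+2) := by rcases h with ⟨m, hm⟩; exact ⟨m-1, by omega⟩
      have hpow : ((Real.sqrt 2 : ℝ) : ℂ)^(n+1+3+1) = ((Real.sqrt 2 : ℝ) : ℂ)^(n+2+1) * 2 := by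
        rw [show n+1+3+1 = (n+2+1)+2 by ring, pow_add, sqrt2_sq]
      rw [show G a (n+1+3) = 2 * G a (n+2) from G_rec a ha n, (ih.1).1 h2, hpow]
      ring
    · intro h
      have h2 : Even (n+2) := by rcases h with ⟨m, hm⟩; exact ⟨m-1, by omega⟩
      rw [show G a (n+1+3) = 2 * G a (n+2) from G_rec a ha n, (ih.1).2 h2,
        show (n+1+3)/2 = (n+2)/2 + 1 by omega, pow_succ]
      ring

lemma Icc_eq (a : ℤ) (l : ℕ) :
    ∑ k ∈ Finset.Icc (1:ℕ) (2^l), eC ((a:ℂ)*(k:ℂ)^2/2^l) = G a l := by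
  set f := fun k : ℕ => eC ((a:ℂ)*(k:ℂ)^2/2^l) with hfdef
  have hins : Finset.range (2^l+1) = insert 0 (Finset.Icc 1 (2^l)) := by
    have h1 : 1 ≤ 2^l := Nat.one_le_two_pow
    ext k; simp [Nat.lt_succ_iff]; omega
  have h0 : f 0 = 1 := by
    show eC _ = 1
    norm_num [eC_zero]
  have hN : f (2^l) = 1 := by
    show eC _ = 1
    have h2 : (2:ℂ)^l ≠ 0 := pow_ne_zero _ two_ne_zero
    rw [show (a:ℂ)*((2^l:ℕ):ℂ)^2/2^l = ((a*2^l : ℤ):ℂ) by push_cast; field_simp]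
    exact eC_int _
  have hkey := Finset.sum_range_succ f (2^l)
  rw [hins, Finset.sum_insert (by simp), h0, hN] at hkey
  show ∑ k ∈ Finset.Icc (1:ℕ) (2^l), f k = ∑ k ∈ Finset.range (2^l), f k
  linear_combination hkey



/-- for odd `a` and `l > 1`, the quadratic Gauss sum
`∑_{k=1}^{2^l} e(a k²/2^l)` equals `2^((l+1)/2) e(a/8)` for `l` odd and
`2^(l/2) (1 + e(a/4))` for `l` even. -/
theorem stmt0 (a : ℤ) (ha : Odd a) (l : ℕ) (hl : 1 < l) :
    (Odd l → ∑ k ∈ Finset.Icc (1 : ℕ) (2 ^ l), eC ((a : ℂ) * (k : ℂ) ^ 2 / 2 ^ l) =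
      (Real.sqrt 2 : ℂ) ^ (l + 1) * eC ((a : ℂ) / 8)) ∧
    (Even l → ∑ k ∈ Finset.Icc (1 : ℕ) (2 ^ l), eC ((a : ℂ) * (k : ℂ) ^ 2 / 2 ^ l) =
      2 ^ (l / 2) * (1 + eC ((a : ℂ) / 4))) := by
  obtain ⟨m, rfl⟩ : ∃ m, l = m + 2 := ⟨l - 2, by omega⟩
  have hP := (main a ha m).1
  rw [Icc_eq a (m+2)]
  exact hP
end
end

section
/- For any prime p and positive integer n, the group Γ₀(pⁿ) decomposes as the disjoint union over residues l mod pⁿ with gcd(l,p)=1 and residues j mod pⁿ of the cosets S T^l S T^{l⁻¹} S T^j Γ(pⁿ), where S = [[0,-1],[1,0]], T = [[1,1],[0,1]], l⁻¹ is an inverse of l modulo pⁿ, Γ₀(pⁿ) is the subgroup of SL₂(ℤ) of matrices with lower-left entry divisible by pⁿ, and Γ(pⁿ) is the principal congruence subgroup of level pⁿ. -/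
open Matrix MatrixGroups CongruenceSubgroup ModularGroup

/-! Multiplying out, `S T^a S T^b S T^c = [[-b, 1 - bc], [ab - 1, (ab - 1)c - a]]`. For
`a = l`, `b = l⁻¹` modulo `N = pⁿ` this reduces to `[[-l⁻¹, 1 - l⁻¹ j], [0, -l]]`, and an upper
triangular matrix `[[a, b], [0, d]]` with `ad = 1` over any commutative ring has this shape for
exactly one pair: `l = -d` and `j = l (1 - b)`. Since `M⁻¹ A ∈ Γ(N)` means that `M` and `A`
reduce to the same matrix mod `N`, and `A ∈ Γ₀(N)` reduces to such an upper triangular matrix,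
the coset of `A` is `S T^l S T^{l⁻¹} S T^j Γ(N)` for exactly one `(l, j)`. -/

theorem coe_S_T_zpow_S_T_zpow_S_T_zpow (a b c : ℤ) :
    (↑(S * T ^ a * S * T ^ b * S * T ^ c) : Matrix (Fin 2) (Fin 2) ℤ) =
      !![-b, 1 - b * c; a * b - 1, (a * b - 1) * c - a] := by
  simp only [Matrix.SpecialLinearGroup.coe_mul, coe_S, coe_T_zpow, mul_fin_two]
  congrm !![?_, ?_; ?_, ?_] <;> ring

theorem coe_map_S_T_pow_S_T_pow_S_T_pow {N : ℕ} [NeZero N] (u : (ZMod N)ˣ) (j : ZMod N) :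
    (↑(SpecialLinearGroup.map (Int.castRingHom (ZMod N))
        (S * T ^ (u : ZMod N).val * S * T ^ (↑u⁻¹ : ZMod N).val * S * T ^ j.val)) :
        Matrix (Fin 2) (Fin 2) (ZMod N)) =
      !![-↑u⁻¹, 1 - ↑u⁻¹ * j; 0, -(u : ZMod N)] := by
  simp only [← zpow_natCast, SpecialLinearGroup.map_apply_coe, RingHom.mapMatrix_apply,
    coe_S_T_zpow_S_T_zpow_S_T_zpow]
  ext i k
  fin_cases i <;> fin_cases k <;> simp

theorem inv_mul_mem_Gamma_iff {N : ℕ} {M A : SL(2, ℤ)} :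
    M⁻¹ * A ∈ Gamma N ↔
      (↑(SpecialLinearGroup.map (Int.castRingHom (ZMod N)) M) : Matrix (Fin 2) (Fin 2) (ZMod N)) =
        ↑(SpecialLinearGroup.map (Int.castRingHom (ZMod N)) A) := by
  rw [Gamma_mem', map_mul, map_inv, inv_mul_eq_one]
  exact Subtype.coe_injective.eq_iff.symm

theorem existsUnique_units_prod_eq_upperTriangular {R : Type*} [CommRing R] {a d : R} (b : R)
    (h : a * d = 1) :
    ∃! uj : Rˣ × R, !![-↑uj.1⁻¹, 1 - ↑uj.1⁻¹ * uj.2; 0, -(uj.1 : R)] = !![a, b; 0, d] := by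
  let u : Rˣ := ⟨-d, -a, by rw [neg_mul_neg, mul_comm, h], by rw [neg_mul_neg, h]⟩
  simp only [EmbeddingLike.apply_eq_iff_eq, vecCons_inj, and_true, true_and]
  refine ⟨(u, u * (1 - b)), ⟨⟨neg_neg a, ?_⟩, neg_neg d⟩, ?_⟩
  · simp only [Units.inv_mul_cancel_left, sub_sub_cancel]
  · rintro ⟨v, j⟩ ⟨⟨-, hj⟩, hd⟩
    obtain rfl : v = u := Units.ext (neg_eq_iff_eq_neg.mp hd)
    rw [Prod.mk.injEq, eq_self, true_and, ← hj, sub_sub_cancel, Units.mul_inv_cancel_left]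

theorem stmt2_general (p : ℕ) [hp : Fact p.Prime] (n : ℕ) :
    ∀ A ∈ Gamma0 (p ^ n), ∃! lj : (ZMod (p ^ n))ˣ × ZMod (p ^ n),
      (ModularGroup.S * ModularGroup.T ^ ((lj.1 : ZMod (p ^ n)).val) * ModularGroup.S *
          ModularGroup.T ^ (((lj.1⁻¹ : (ZMod (p ^ n))ˣ) : ZMod (p ^ n)).val) *
          ModularGroup.S * ModularGroup.T ^ lj.2.val)⁻¹ * A ∈ Gamma (p ^ n) := by
  intro A hA
  -- `ZMod.val` inverts the cast only at nonzero level (`ZMod 0 = ℤ`, where `val = natAbs`).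
  have : NeZero (p ^ n) := ⟨pow_ne_zero n hp.out.ne_zero⟩
  set B := SpecialLinearGroup.map (Int.castRingHom (ZMod (p ^ n))) A
  have hB : (B : Matrix (Fin 2) (Fin 2) (ZMod (p ^ n))) = !![B 0 0, B 0 1; 0, B 1 1] := by
    rw [← Gamma0_mem.mp hA]
    exact eta_fin_two _
  have hdet : B 0 0 * B 1 1 = 1 := by
    have h := B.det_coe
    rwa [hB, det_fin_two_of, mul_zero, sub_zero] at h
  refine (existsUnique_congr fun lj => ?_).mp
    (existsUnique_units_prod_eq_upperTriangular (B 0 1) hdet)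
  rw [inv_mul_mem_Gamma_iff, coe_map_S_T_pow_S_T_pow_S_T_pow, ← hB]

/-- for a prime `p` and `n ≥ 1`, `Γ₀(pⁿ)` is the disjoint union, over
residues `l` mod `pⁿ` coprime to `p` and residues `j` mod `pⁿ`, of the cosets
`S T^l S T^{l⁻¹} S T^j Γ(pⁿ)`: every `A ∈ Γ₀(pⁿ)` lies in exactly one such coset. -/
theorem stmt2 (p : ℕ) [hp : Fact p.Prime] (n : ℕ) (hn : 0 < n) :
    ∀ A ∈ Gamma0 (p ^ n), ∃! lj : (ZMod (p ^ n))ˣ × ZMod (p ^ n),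
      (ModularGroup.S * ModularGroup.T ^ ((lj.1 : ZMod (p ^ n)).val) * ModularGroup.S *
          ModularGroup.T ^ (((lj.1⁻¹ : (ZMod (p ^ n))ˣ) : ZMod (p ^ n)).val) *
          ModularGroup.S * ModularGroup.T ^ lj.2.val)⁻¹ * A ∈ Gamma (p ^ n) :=
  stmt2_general p (hp := hp) n
end

section
/- Let p be an odd prime, n ≥ 1, a an integer coprime to p, and m, m' integers with m·m' ≡ 1 (mod pⁿ). Define the Weil representation ρ of SL₂(ℤ) on the free complex vector space ℂL with basis e^γ indexed by γ ∈ ℤ/pⁿℤ by ρ(T)e^γ = e(aγ²/pⁿ)e^γ and ρ(S)e^γ = (e(-sign/8)/p^{n/2}) ∑_{β} e(-2aγβ/pⁿ) e^β, where e(sign/8) equals (a/p)i if p ≡ 3 mod 4 and n odd, (a/p) if p ≡ 1 mod 4 and n odd, and 1 if n even. Then ρ(S)ρ(T^{m'})ρ(S)ρ(T^m)ρ(S) e^γ = e(-a m' γ²/pⁿ) e^{-m'γ} if n is even, and equals (-m/p)·e(-a m' γ²/pⁿ)·e^{-m'γ} if n is odd. -/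
open Complex Matrix MatrixGroups CongruenceSubgroup ModularGroup

noncomputable section

/-- The basis vector `e^γ` of `ℂ L`. -/
def bas {α : Type*} [DecidableEq α] (γ : α) : α → ℂ := fun x => if x = γ then 1 else 0

/-- The value `e(sign(L_{pⁿ}(a))/8)`: it is `(a/p)·i` for `p ≡ 3 (mod 4)`, `n` odd,
`(a/p)` for `p ≡ 1 (mod 4)`, `n` odd, and `1` for `n` even. -/
def sgOdd (p : ℕ) [Fact p.Prime] (n : ℕ) (a : ℤ) : ℂ :=
  if Odd n then
    (if p % 4 = 3 then (legendreSym p a : ℂ) * Complex.I else (legendreSym p a : ℂ))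
  else 1


/-!
Write `ψ(x) = e(x/pⁿ)`, `A = a mod pⁿ`, `G(b) = ∑ₓ ψ(b x²)` and `c = e(-sign/8)/p^{n/2}` for the
constant in `ρ(S)`. Following `e^γ` through `S, T^m, S, T^{m'}, S` one meets a character
`β ↦ ψ(-2Aγβ)`, then a Gaussian `β ↦ ψ(Amβ² - 2Aγβ)`, which `S` maps, by completing the square, to
`c G(Am) ψ(-Am'(γ+δ)²)`; after `T^{m'}` this is again a character, which `S` sends to a multiple of
`e^{-m'γ}`. So the result is `c³ pⁿ G(Am) ψ(-Am'γ²) e^{-m'γ}`. Applying the same computation to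
the relation `(ST)³ = S²` gives `c³ pⁿ G(A) = c² pⁿ = (-1/p)ⁿ`, and `G(Am) = (m/p)ⁿ G(A)` follows
from `G_{q²K}(b) = q G_K(b)` and, over `𝔽_p`, from `G(bm) = (m/p) G(b)`.
-/

open ZMod (stdAddChar stdAddChar_coe isPrimitive_stdAddChar)

lemma stdAddChar_intCast_mul {d N M : ℕ} [NeZero N] [NeZero M] (hM : M = d * N) (x : ℤ) :
    stdAddChar ((d * x : ℤ) : ZMod M) = stdAddChar (x : ZMod N) := by
  subst hM
  have hd : (d : ℂ) ≠ 0 := by exact_mod_cast left_ne_zero_of_mul (NeZero.ne (d * N))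
  rw [stdAddChar_coe, stdAddChar_coe]
  push_cast
  field_simp

lemma sum_zmod_eq_sum_fin {M : Type*} [AddCommMonoid M] (N : ℕ) [NeZero N] (f : ZMod N → M) :
    ∑ x, f x = ∑ i : Fin N, f i := by
  refine (Fintype.sum_bijective (fun i : Fin N => ((i : ℕ) : ZMod N)) ?_ _ f fun _ => rfl).symm
  rw [Fintype.bijective_iff_injective_and_card, ZMod.card, Fintype.card_fin]
  refine ⟨fun i j hij => Fin.ext ?_, rfl⟩
  simpa [ZMod.val_natCast_of_lt i.isLt, ZMod.val_natCast_of_lt j.isLt] using congrArg ZMod.val hij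

lemma sum_fin_eq_sum_fin_mul {M : Type*} [AddCommMonoid M] {N m n : ℕ} (hN : N = m * n)
    (f : ℕ → M) : ∑ i : Fin N, f i = ∑ j : Fin m, ∑ k : Fin n, f (k + n * j) := by
  subst hN
  rw [← Fintype.sum_prod_type' (f := fun (j : Fin m) (k : Fin n) => f (k + n * j))]
  exact (Fintype.sum_equiv finProdFinEquiv _ _ fun _ => rfl).symm

lemma sum_fin_stdAddChar_mul (q : ℕ) [NeZero q] (t : ℤ) :
    ∑ v : Fin q, stdAddChar ((t * v : ℤ) : ZMod q) = if (q : ℤ) ∣ t then (q : ℂ) else 0 := by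
  have h := AddChar.sum_mulShift (t : ZMod q) (isPrimitive_stdAddChar q)
  simp only [sum_zmod_eq_sum_fin, ZMod.card, ZMod.intCast_zmod_eq_zero_iff_dvd] at h
  push_cast
  simpa [mul_comm, apply_ite] using h

def quadGaussSum (N : ℕ) [NeZero N] (b : ZMod N) : ℂ := ∑ x, stdAddChar (b * x ^ 2)

lemma quadGaussSum_intCast_eq_sum_fin (N : ℕ) [NeZero N] (b : ℤ) :
    quadGaussSum N b = ∑ i : Fin N, stdAddChar ((b * (i : ℕ) ^ 2 : ℤ) : ZMod N) := by
  rw [quadGaussSum, sum_zmod_eq_sum_fin]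
  push_cast
  rfl

lemma quadGaussSum_one (b : ZMod 1) : quadGaussSum 1 b = 1 := by
  simp [quadGaussSum, Subsingleton.elim _ (0 : ZMod 1)]

theorem quadGaussSum_eq_mul_of_eq_sq_mul {M q K : ℕ} [NeZero M] [NeZero q] [NeZero K]
    (hM : M = q ^ 2 * K) (b : ℤ) (hb : IsCoprime (2 * b) q) :
    quadGaussSum M b = q * quadGaussSum K b := by
  set L := K * q with hL
  have hML : M = q * L := by rw [hM, hL]; ring
  -- Writing `x = u + L v` with `u < L`, `v < q`, one has `b x² ≡ b u² + L (2 b u v) (mod M)`.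
  have hsplit (u v : ℕ) : stdAddChar ((b * (u + L * v : ℕ) ^ 2 : ℤ) : ZMod M) =
      stdAddChar ((b * u ^ 2 : ℤ) : ZMod M) * stdAddChar ((2 * b * u * v : ℤ) : ZMod q) := by
    have hcast : ((b * (u + L * v : ℕ) ^ 2 : ℤ) : ZMod M) =
        ((b * u ^ 2 : ℤ) : ZMod M) + ((L * (2 * b * u * v) : ℤ) : ZMod M) := by
      have hint : b * ((u + L * v : ℕ) : ℤ) ^ 2 =
          b * u ^ 2 + L * (2 * b * u * v) + M * (K * b * v ^ 2) := by
        push_cast [hM, hL]; ring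
      rw [hint]
      push_cast
      rw [ZMod.natCast_self, zero_mul, add_zero]
    rw [hcast, AddChar.map_add_eq_mul, stdAddChar_intCast_mul (by rw [hML, mul_comm])]
  have hdvd (u : ℕ) : (q : ℤ) ∣ 2 * b * u ↔ q ∣ u := by
    rw [← Int.natCast_dvd_natCast]
    exact ⟨hb.symm.dvd_of_dvd_mul_left, fun h => h.mul_left _⟩
  calc quadGaussSum M b
      = ∑ v : Fin q, ∑ u : Fin L, stdAddChar ((b * ((u : ℕ) + L * v : ℕ) ^ 2 : ℤ) : ZMod M) := by
        rw [quadGaussSum_intCast_eq_sum_fin, sum_fin_eq_sum_fin_mul hML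
          (fun x => stdAddChar ((b * x ^ 2 : ℤ) : ZMod M))]
    _ = q * ∑ u : Fin L,
          if q ∣ (u : ℕ) then stdAddChar ((b * (u : ℕ) ^ 2 : ℤ) : ZMod M) else 0 := by
        rw [Finset.sum_comm, Finset.mul_sum]
        refine Finset.sum_congr rfl fun u _ => ?_
        simp_rw [hsplit, ← Finset.mul_sum, sum_fin_stdAddChar_mul, hdvd]
        split_ifs <;> ring
    _ = q * ∑ w : Fin K, stdAddChar ((b * (q * w : ℕ) ^ 2 : ℤ) : ZMod M) := by
        rw [sum_fin_eq_sum_fin_mul hL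
          (fun x => if q ∣ x then stdAddChar ((b * x ^ 2 : ℤ) : ZMod M) else 0)]
        congr 1
        refine Finset.sum_congr rfl fun w _ => ?_
        rw [Finset.sum_eq_single ⟨0, Nat.pos_of_neZero q⟩]
        · simp
        · intro r _ hr
          refine if_neg fun h => hr (Fin.ext (Nat.eq_zero_of_dvd_of_lt ?_ r.isLt))
          exact (Nat.dvd_add_left (dvd_mul_right _ _)).mp h
        · simp
    _ = q * quadGaussSum K b := by
        rw [quadGaussSum_intCast_eq_sum_fin]
        congr 1
        refine Finset.sum_congr rfl fun w _ => ?_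
        rw [← stdAddChar_intCast_mul (d := q ^ 2) hM]
        push_cast
        ring_nf

theorem quadGaussSum_eq_pow_mul_of_eq_pow_mul {M q K k : ℕ} [NeZero M] [NeZero q] [NeZero K]
    (hM : M = q ^ (2 * k) * K) (b : ℤ) (hb : IsCoprime (2 * b) q) :
    quadGaussSum M b = q ^ k * quadGaussSum K b := by
  induction k generalizing M with
  | zero =>
    rw [mul_zero, pow_zero, one_mul] at hM
    subst hM
    rw [pow_zero, one_mul]
  | succ k ih =>
    rw [quadGaussSum_eq_mul_of_eq_sq_mul (K := q ^ (2 * k) * K) (by rw [hM]; ring) b hb, ih rfl]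
    ring

section FiniteField

variable {F R : Type*} [Field F] [Fintype F] [DecidableEq F] [CommRing R] [IsDomain R]

lemma sum_addChar_mul_sq (hF : ringChar F ≠ 2) {ψ : AddChar F R} (hψ : ψ.IsPrimitive) {b : F}
    (hb : b ≠ 0) : ∑ x, ψ (b * x ^ 2) = ∑ y, (quadraticChar F y : R) * ψ (b * y) := by
  have hfiber (y : F) :
      ∑ x with x ^ 2 = y, ψ (b * x ^ 2) = (quadraticChar F y + 1 : ℤ) * ψ (b * y) := by
    rw [← quadraticChar_card_sqrts hF y, Finset.sum_congr rfl fun x hx => by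
      rw [(Finset.mem_filter.mp hx).2], Finset.sum_const, nsmul_eq_mul, Int.cast_natCast,
      Set.toFinset_ofPred]
  have hsum : ∑ y, ψ (b * y) = 0 := by
    simpa [mul_comm, hb] using AddChar.sum_mulShift b hψ
  rw [← Finset.sum_fiberwise Finset.univ (· ^ 2), Finset.sum_congr rfl fun y _ => hfiber y]
  simp [add_mul, Finset.sum_add_distrib, hsum]

lemma sum_addChar_mul_mul_sq (hF : ringChar F ≠ 2) {ψ : AddChar F R} (hψ : ψ.IsPrimitive)
    {b u : F} (hb : b ≠ 0) (hu : u ≠ 0) :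
    ∑ x, ψ (b * u * x ^ 2) = quadraticChar F u * ∑ x, ψ (b * x ^ 2) := by
  have hχ : (quadraticChar F u : R) ^ 2 = 1 := by
    rw [← Int.cast_pow, quadraticChar_sq_one hu, Int.cast_one]
  rw [sum_addChar_mul_sq hF hψ (mul_ne_zero hb hu), sum_addChar_mul_sq hF hψ hb, Finset.mul_sum,
    ← Equiv.sum_comp (Equiv.mulLeft₀ u hu) fun z =>
      (quadraticChar F u : R) * (quadraticChar F z * ψ (b * z))]
  refine Finset.sum_congr rfl fun y _ => ?_
  simp only [Equiv.mulLeft₀_apply, map_mul, Int.cast_mul, ← mul_assoc]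
  linear_combination -(quadraticChar F y * ψ (b * u * y)) * hχ

end FiniteField

lemma Nat.Prime.isCoprime_two {p : ℕ} (hp : p.Prime) (h2 : p ≠ 2) : IsCoprime (2 : ℤ) p :=
  Nat.isCoprime_iff_coprime.mpr ((Nat.coprime_primes Nat.prime_two hp).mpr h2.symm)

lemma intCast_zmod_ne_zero_of_isCoprime {p : ℕ} [Fact p.Prime] {x : ℤ} (hx : IsCoprime x p) :
    (x : ZMod p) ≠ 0 :=
  ((ZMod.coe_int_isUnit_iff_isCoprime x p).mpr hx.symm).ne_zero

theorem quadGaussSum_prime_pow_mul {p : ℕ} [Fact p.Prime] (hp : p ≠ 2) (n : ℕ) {b u : ℤ}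
    (hb : IsCoprime b p) (hu : IsCoprime u p) :
    quadGaussSum (p ^ n) (b * u) = legendreSym p u ^ n * quadGaussSum (p ^ n) b := by
  have h2 := (Fact.out : p.Prime).isCoprime_two hp
  have hχ : (legendreSym p u : ℂ) ^ 2 = 1 := by
    exact_mod_cast legendreSym.sq_one p (intCast_zmod_ne_zero_of_isCoprime hu)
  rw [← Int.cast_mul]
  obtain ⟨k, rfl | rfl⟩ := Nat.even_or_odd' n
  · rw [quadGaussSum_eq_pow_mul_of_eq_pow_mul (K := 1) (mul_one _).symm _
        (h2.mul_left (hb.mul_left hu)),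
      quadGaussSum_eq_pow_mul_of_eq_pow_mul (K := 1) (mul_one _).symm _ (h2.mul_left hb),
      quadGaussSum_one, quadGaussSum_one, pow_mul, hχ]
    ring
  · rw [quadGaussSum_eq_pow_mul_of_eq_pow_mul (K := p) (pow_succ _ _) _
        (h2.mul_left (hb.mul_left hu)),
      quadGaussSum_eq_pow_mul_of_eq_pow_mul (K := p) (pow_succ _ _) _ (h2.mul_left hb),
      quadGaussSum, quadGaussSum, Int.cast_mul,
      sum_addChar_mul_mul_sq ((ZMod.ringChar_zmod_n p).symm ▸ hp) (isPrimitive_stdAddChar p)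
        (intCast_zmod_ne_zero_of_isCoprime hb) (intCast_zmod_ne_zero_of_isCoprime hu),
      pow_succ, pow_mul, hχ]
    simp only [legendreSym]
    ring

lemma LinearEquiv.zpow_apply_of_apply_eq_smul {K V : Type*} [Field K] [AddCommGroup V]
    [Module K V] (f : V ≃ₗ[K] V) {v : V} {s : K} (hs : s ≠ 0) (h : f v = s • v) (k : ℤ) :
    (f ^ k) v = s ^ k • v := by
  have hinv : f⁻¹ v = s⁻¹ • v := f.symm_apply_eq.mpr (by rw [map_smul, h, inv_smul_smul₀ hs])
  induction k using Int.induction_on with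
  | zero => simp
  | succ i ih =>
    rw [_root_.zpow_add_one, LinearEquiv.mul_apply, h, map_smul, ih, smul_smul,
      zpow_add_one₀ hs, mul_comm]
  | pred i ih =>
    rw [_root_.zpow_sub_one, LinearEquiv.mul_apply, hinv, map_smul, ih, smul_smul,
      zpow_sub_one₀ hs, mul_comm]

lemma sum_smul_bas {α : Type*} [Fintype α] [DecidableEq α] (f : α → ℂ) :
    ∑ β, f β • bas β = f := by
  ext x
  simp [bas]

lemma LinearEquiv.apply_eq_sum_smul_bas {α : Type*} [Fintype α] [DecidableEq α]
    (g : (α → ℂ) ≃ₗ[ℂ] (α → ℂ)) (v : α → ℂ) : g v = ∑ β, v β • g (bas β) := by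
  conv_lhs => rw [← sum_smul_bas v]
  simp only [map_sum, map_smul]

/-- `ρ` is the Weil representation of the quadratic form `γ ↦ A γ² / N` on `ZMod N`, with `c`
standing for the normalising factor `e(-sign/8) / √N` of `ρ(S)`. -/
structure IsWeilRep {N : ℕ} [NeZero N] (A : ZMod N) (c : ℂ)
    (ρ : SL(2, ℤ) →* ((ZMod N → ℂ) ≃ₗ[ℂ] (ZMod N → ℂ))) : Prop where
  apply_S_bas (γ : ZMod N) : ρ S (bas γ) = c • fun δ => stdAddChar (-(2 * A * γ * δ))
  apply_T_bas (γ : ZMod N) : ρ T (bas γ) = stdAddChar (A * γ ^ 2) • bas γ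

namespace IsWeilRep

variable {N : ℕ} [NeZero N] {A : ZMod N} {c : ℂ}
  {ρ : SL(2, ℤ) →* ((ZMod N → ℂ) ≃ₗ[ℂ] (ZMod N → ℂ))}

lemma apply_S (h : IsWeilRep A c ρ) (v : ZMod N → ℂ) :
    ρ S v = c • fun δ => ∑ β, v β * stdAddChar (-(2 * A * β * δ)) := by
  rw [LinearEquiv.apply_eq_sum_smul_bas]
  ext δ
  simp [h.apply_S_bas, Finset.mul_sum, mul_left_comm]

lemma apply_T_zpow (h : IsWeilRep A c ρ) (k : ℤ) (v : ZMod N → ℂ) :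
    ρ (T ^ k) v = fun δ => stdAddChar ((k : ZMod N) * (A * δ ^ 2)) * v δ := by
  rw [map_zpow, LinearEquiv.apply_eq_sum_smul_bas]
  simp_rw [LinearEquiv.zpow_apply_of_apply_eq_smul _ (AddChar.val_isUnit _ _).ne_zero
    (h.apply_T_bas _), smul_smul, ← AddChar.map_zsmul_eq_zpow, zsmul_eq_mul, mul_comm (v _)]
  exact sum_smul_bas _

lemma apply_S_addChar (h : IsWeilRep A c ρ) (hA : IsUnit (2 * A)) (γ : ZMod N) :
    ρ S (fun β => stdAddChar (-(2 * A * γ * β))) = (c * N) • bas (-γ) := by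
  rw [h.apply_S]
  ext δ
  have hsum : ∑ β, stdAddChar (-(2 * A * γ * β)) * stdAddChar (-(2 * A * β * δ)) =
      ∑ β, stdAddChar (β * -(2 * A * (γ + δ))) := by
    refine Finset.sum_congr rfl fun β _ => ?_
    rw [← AddChar.map_add_eq_mul]
    ring_nf
  have hzero : -(2 * A * (γ + δ)) = 0 ↔ δ = -γ := by
    rw [neg_eq_zero, hA.mul_right_eq_zero, add_eq_zero_iff_neg_eq, eq_comm]
  simp only [Pi.smul_apply, smul_eq_mul, hsum, AddChar.sum_mulShift _ (isPrimitive_stdAddChar N),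
    hzero, ZMod.card, bas]
  split_ifs <;> ring

lemma apply_S_gaussian (h : IsWeilRep A c ρ) {μ μ' : ZMod N} (hμ : μ * μ' = 1) (γ : ZMod N) :
    ρ S (fun β => stdAddChar (A * μ * β ^ 2 - 2 * A * γ * β)) =
      (c * quadGaussSum N (A * μ)) • fun δ => stdAddChar (-(A * μ' * (γ + δ) ^ 2)) := by
  rw [h.apply_S]
  ext δ
  have hsq (β : ZMod N) :
      stdAddChar (A * μ * β ^ 2 - 2 * A * γ * β) * stdAddChar (-(2 * A * β * δ)) =
        stdAddChar (-(A * μ' * (γ + δ) ^ 2)) * stdAddChar (A * μ * (β - μ' * (γ + δ)) ^ 2) := by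
    rw [← AddChar.map_add_eq_mul, ← AddChar.map_add_eq_mul]
    congr 1
    linear_combination (2 * A * β * (γ + δ) - A * μ' * (γ + δ) ^ 2) * hμ
  have hshift : ∑ β, stdAddChar (A * μ * (β - μ' * (γ + δ)) ^ 2) = quadGaussSum N (A * μ) :=
    Fintype.sum_equiv (Equiv.subRight (μ' * (γ + δ))) _ _ fun _ => rfl
  simp only [Pi.smul_apply, smul_eq_mul, hsq, ← Finset.mul_sum, hshift]
  ring

lemma apply_S_T_S_T_S (h : IsWeilRep A c ρ) (hA : IsUnit (2 * A)) {m m' : ℤ}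
    (hm : (m : ZMod N) * m' = 1) (γ : ZMod N) :
    ρ (S * T ^ m' * S * T ^ m * S) (bas γ) =
      (c ^ 3 * N * quadGaussSum N (A * m) * stdAddChar (-(A * (m' : ZMod N) * γ ^ 2))) •
        bas (-((m' : ZMod N) * γ)) := by
  have h₁ : ρ (T ^ m) (ρ S (bas γ)) =
      c • fun β => stdAddChar (A * (m : ZMod N) * β ^ 2 - 2 * A * γ * β) := by
    rw [h.apply_S_bas, map_smul, h.apply_T_zpow]
    congr 1
    ext β
    rw [← AddChar.map_add_eq_mul]
    ring_nf
  have h₂ : ρ (T ^ m') (ρ S (ρ (T ^ m) (ρ S (bas γ)))) =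
      (c * (c * quadGaussSum N (A * m)) * stdAddChar (-(A * (m' : ZMod N) * γ ^ 2))) •
        fun δ => stdAddChar (-(2 * A * ((m' : ZMod N) * γ) * δ)) := by
    rw [h₁, map_smul, h.apply_S_gaussian hm, map_smul, h.apply_T_zpow]
    ext δ
    have hexp : stdAddChar ((m' : ZMod N) * (A * δ ^ 2)) *
        stdAddChar (-(A * (m' : ZMod N) * (γ + δ) ^ 2)) =
        stdAddChar (-(A * (m' : ZMod N) * γ ^ 2)) *
          stdAddChar (-(2 * A * ((m' : ZMod N) * γ) * δ)) := by
      simp only [← AddChar.map_add_eq_mul]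
      ring_nf
    simp only [Pi.smul_apply, smul_eq_mul]
    linear_combination (c * (c * quadGaussSum N (A * m))) * hexp
  simp only [map_mul, LinearEquiv.mul_apply]
  rw [h₂, map_smul, h.apply_S_addChar hA, smul_smul]
  congr 1
  ring

lemma pow_three_mul_quadGaussSum (h : IsWeilRep A c ρ) (hA : IsUnit (2 * A)) :
    c ^ 3 * N * quadGaussSum N A = c ^ 2 * N := by
  have hST : S * T ^ (1 : ℤ) * S * T ^ (1 : ℤ) * S * T = S * S := by
    simp only [zpow_one]
    ext i j
    fin_cases i <;> fin_cases j <;> rfl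
  have hT : ρ T (bas 0) = bas 0 := by simp [h.apply_T_bas]
  have hSS : ρ (S * S) (bas 0) = (c * (c * N)) • bas 0 := by
    rw [map_mul, LinearEquiv.mul_apply, h.apply_S_bas, map_smul, h.apply_S_addChar hA, neg_zero,
      smul_smul]
  have key := congrArg (fun g => ρ g (bas (0 : ZMod N)) 0) hST
  rw [map_mul ρ _ T, LinearEquiv.mul_apply, hT, h.apply_S_T_S_T_S hA (by simp) 0, hSS] at key
  simp [bas] at key
  linear_combination key

end IsWeilRep

lemma eC_intCast_div (N : ℕ) [NeZero N] (x : ℤ) : eC (x / N) = stdAddChar (x : ZMod N) := by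
  rw [eC, stdAddChar_coe, mul_div_assoc]

lemma sgOdd_inv_sq {p : ℕ} [Fact p.Prime] (hp : p ≠ 2) (n : ℕ) {a : ℤ} (ha : (a : ZMod p) ≠ 0) :
    (sgOdd p n a)⁻¹ ^ 2 = legendreSym p (-1) ^ n := by
  have hχ : (legendreSym p a : ℂ) ^ 2 = 1 := by exact_mod_cast legendreSym.sq_one p ha
  have hp4 : p % 4 = 1 ∨ p % 4 = 3 :=
    Nat.odd_mod_four_iff.mp ((Fact.out : p.Prime).eq_two_or_odd.resolve_left hp)
  rw [legendreSym.at_neg_one hp, sgOdd]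
  split_ifs with hn h4
  · rw [ZMod.χ₄_nat_three_mod_four h4, Int.cast_neg, Int.cast_one, hn.neg_one_pow, inv_pow,
      mul_pow, hχ, I_sq]
    norm_num
  · rw [ZMod.χ₄_nat_one_mod_four (hp4.resolve_right h4), inv_pow, hχ]
    simp
  · rcases hp4 with h4 | h4
    · simp [ZMod.χ₄_nat_one_mod_four h4]
    · simp [ZMod.χ₄_nat_three_mod_four h4, (Nat.not_odd_iff_even.mp hn).neg_one_pow]

lemma sgOdd_inv_div_sqrt_sq_mul {p : ℕ} [Fact p.Prime] (hp : p ≠ 2) (n : ℕ) {a : ℤ}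
    (ha : (a : ZMod p) ≠ 0) :
    ((sgOdd p n a)⁻¹ / Real.sqrt ((p : ℝ) ^ n)) ^ 2 * (p ^ n : ℕ) = legendreSym p (-1) ^ n := by
  have hsqrt : ((Real.sqrt ((p : ℝ) ^ n) : ℝ) : ℂ) ^ 2 = (p ^ n : ℕ) := by
    rw [← ofReal_pow, Real.sq_sqrt (by positivity)]
    push_cast
    rfl
  rw [div_pow, hsqrt, div_mul_cancel₀ _ (NeZero.ne _), sgOdd_inv_sq hp n ha]

lemma isWeilRep_of_eC {N : ℕ} [NeZero N] {a : ℤ} {c : ℂ}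
    {ρ : SL(2, ℤ) →* ((ZMod N → ℂ) ≃ₗ[ℂ] (ZMod N → ℂ))}
    (hT : ∀ γ : ZMod N, ρ T (bas γ) = eC ((a : ℂ) * (γ.val : ℂ) ^ 2 / N) • bas γ)
    (hS : ∀ γ : ZMod N, ρ S (bas γ) =
      c • ∑ β : ZMod N, eC (-(2 * (a : ℂ) * (γ.val : ℂ) * (β.val : ℂ)) / N) • bas β) :
    IsWeilRep (a : ZMod N) c ρ := by
  constructor
  · intro γ
    rw [hS, sum_smul_bas]
    congr 1
    ext β
    have := eC_intCast_div N (-(2 * a * γ.val * β.val))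
    push_cast [ZMod.natCast_zmod_val] at this
    exact this
  · intro γ
    rw [hT]
    congr 1
    have := eC_intCast_div N (a * γ.val ^ 2)
    push_cast [ZMod.natCast_zmod_val] at this
    exact this

theorem IsWeilRep.apply_S_T_S_T_S_eq_legendreSym {p : ℕ} [Fact p.Prime] (hp : p ≠ 2) {n : ℕ}
    {a m m' : ℤ} {c : ℂ} {ρ : SL(2, ℤ) →* ((ZMod (p ^ n) → ℂ) ≃ₗ[ℂ] (ZMod (p ^ n) → ℂ))}
    (h : IsWeilRep (a : ZMod (p ^ n)) c ρ) (hc : c ^ 2 * (p ^ n : ℕ) = legendreSym p (-1) ^ n)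
    (ha : IsCoprime a p) (hm : IsCoprime m p) (hmm' : (m : ZMod (p ^ n)) * m' = 1)
    (γ : ZMod (p ^ n)) :
    ρ (S * T ^ m' * S * T ^ m * S) (bas γ) =
      (legendreSym p (-m) ^ n * stdAddChar (-((a : ZMod (p ^ n)) * (m' : ZMod (p ^ n)) * γ ^ 2))) •
        bas (-((m' : ZMod (p ^ n)) * γ)) := by
  have hA : IsUnit (2 * (a : ZMod (p ^ n))) := by
    rw [← Int.cast_ofNat, ← Int.cast_mul, ZMod.coe_int_isUnit_iff_isCoprime]
    push_cast
    exact ((Fact.out : p.Prime).isCoprime_two hp).mul_left ha |>.pow_right.symm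
  rw [h.apply_S_T_S_T_S hA hmm', quadGaussSum_prime_pow_mul hp n ha hm,
    show -m = -1 * m by ring, legendreSym.mul]
  congr 1
  rw [Int.cast_mul, mul_pow]
  linear_combination (legendreSym p m ^ n *
    stdAddChar (-((a : ZMod (p ^ n)) * (m' : ZMod (p ^ n)) * γ ^ 2)) : ℂ) *
      (h.pow_three_mul_quadGaussSum hA + hc)

/-- for the Weil representation `ρ` of `SL₂(ℤ)` on `ℂ L_{pⁿ}(a)`
(characterized by its values on the generators `T` and `S`), and `m m' ≡ 1 (mod pⁿ)`,
one has `ρ(S T^{m'} S T^m S) e^γ = e(-am'γ²/pⁿ) e^{-m'γ}` if `n` is even, and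
`= (-m/p) e(-am'γ²/pⁿ) e^{-m'γ}` if `n` is odd. -/
theorem stmt3 (p : ℕ) [hp : Fact p.Prime] (hp2 : Odd p) (n : ℕ) (hn : 1 ≤ n)
    (a : ℤ) (ha : IsCoprime a (p : ℤ)) (m m' : ℤ) (hmm' : (m * m' : ℤ) ≡ 1 [ZMOD (p ^ n)])
    (ρ : SL(2, ℤ) →* ((ZMod (p ^ n) → ℂ) ≃ₗ[ℂ] (ZMod (p ^ n) → ℂ)))
    (hT : ∀ γ : ZMod (p ^ n), ρ ModularGroup.T (bas γ) =
      eC ((a : ℂ) * (γ.val : ℂ) ^ 2 / (p : ℂ) ^ n) • bas γ)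
    (hS : ∀ γ : ZMod (p ^ n), ρ ModularGroup.S (bas γ) =
      ((sgOdd p n a)⁻¹ / Real.sqrt ((p : ℝ) ^ n)) •
        ∑ β : ZMod (p ^ n),
          eC (-(2 * (a : ℂ) * (γ.val : ℂ) * (β.val : ℂ)) / (p : ℂ) ^ n) • bas β) :
    ∀ γ : ZMod (p ^ n),
      (Even n →
        ρ (ModularGroup.S * ModularGroup.T ^ m' * ModularGroup.S *
            ModularGroup.T ^ m * ModularGroup.S) (bas γ) =
          eC (-((a : ℂ) * (m' : ℂ) * (γ.val : ℂ) ^ 2) / (p : ℂ) ^ n) •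
            bas (-(m' : ZMod (p ^ n)) * γ)) ∧
      (Odd n →
        ρ (ModularGroup.S * ModularGroup.T ^ m' * ModularGroup.S *
            ModularGroup.T ^ m * ModularGroup.S) (bas γ) =
          ((legendreSym p (-m) : ℂ) *
              eC (-((a : ℂ) * (m' : ℂ) * (γ.val : ℂ) ^ 2) / (p : ℂ) ^ n)) •
            bas (-(m' : ZMod (p ^ n)) * γ)) := by
  have hp_ne_two : p ≠ 2 := by rintro rfl; exact Nat.not_odd_iff_even.mpr even_two hp2
  have hρ := isWeilRep_of_eC (N := p ^ n) (by push_cast; exact hT) (by push_cast; exact hS)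
  have hc := sgOdd_inv_div_sqrt_sq_mul hp_ne_two n (intCast_zmod_ne_zero_of_isCoprime ha)
  have hinv : (m : ZMod (p ^ n)) * m' = 1 := by
    have h := (ZMod.intCast_eq_intCast_iff (m * m') 1 (p ^ n)).mpr (by exact_mod_cast hmm')
    push_cast at h
    exact h
  have hm : IsCoprime m p := by
    have h := (ZMod.coe_int_isUnit_iff_isCoprime m (p ^ n)).mp (IsUnit.of_mul_eq_one _ hinv)
    push_cast at h
    exact ((IsCoprime.pow_left_iff hn).mp h).symm
  have hχ : (legendreSym p (-m) : ℂ) ^ 2 = 1 := by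
    exact_mod_cast legendreSym.sq_one p (intCast_zmod_ne_zero_of_isCoprime hm.neg_left)
  intro γ
  have hmain := hρ.apply_S_T_S_T_S_eq_legendreSym hp_ne_two hc ha hm hinv γ
  have hψ := eC_intCast_div (p ^ n) (-(a * m' * γ.val ^ 2))
  push_cast [ZMod.natCast_zmod_val] at hψ
  rw [← hψ] at hmain
  refine ⟨fun ⟨k, hk⟩ => ?_, fun ⟨k, hk⟩ => ?_⟩
  · have hpow : (legendreSym p (-m) : ℂ) ^ n = 1 := by rw [hk, ← two_mul, pow_mul, hχ, one_pow]
    rw [neg_mul, hmain, hpow, one_mul]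
  · have hpow : (legendreSym p (-m) : ℂ) ^ n = legendreSym p (-m) := by
      rw [hk, pow_succ, pow_mul, hχ, one_pow, one_mul]
    rw [neg_mul, hmain, hpow]
end
end

section
/- Let p be an odd prime and a an integer coprime to p. Then the space of Γ₀(pⁿ)-invariant vectors in the Weil representation ℂL_p(a), where L_p(a) = (ℤ/pℤ, γ ↦ aγ²/p), is zero for every non-negative integer n. -/
open Complex Matrix MatrixGroups CongruenceSubgroup ModularGroup

noncomputable section

/-- The subspace of vectors invariant under a subgroup `Γ` of `SL(2,ℤ)` for a
representation `ρ`. -/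
def invariants {V : Type*} [AddCommGroup V] [Module ℂ V]
    (ρ : SL(2, ℤ) →* (V ≃ₗ[ℂ] V)) (Γ : Subgroup SL(2, ℤ)) : Submodule ℂ V where
  carrier := {v | ∀ g ∈ Γ, ρ g v = v}
  add_mem' := by
    intro x y hx hy g hg
    simp [map_add, hx g hg, hy g hg]
  zero_mem' := by
    intro g hg
    simp
  smul_mem' := by
    intro c x hx g hg
    simp [_root_.map_smul, hx g hg]

namespace Stmt6Aux
open Finset

lemma eC_add (x y : ℂ) : eC (x + y) = eC x * eC y := by
  simp [eC, mul_add, Complex.exp_add]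

lemma eC_int (k : ℤ) : eC (k : ℂ) = 1 := by
  rw [eC, show 2 * (Real.pi : ℂ) * Complex.I * k = k * (2 * Real.pi * Complex.I) by ring,
    Complex.exp_int_mul_two_pi_mul_I]

variable (p : ℕ) [Fact p.Prime]

/-- standard additive character of `ZMod p`. -/
def fch : ZMod p → ℂ := fun x => eC ((x.val : ℂ) / p)

variable {p}

lemma fch_int (m : ℤ) : eC ((m : ℂ) / p) = fch p (m : ZMod p) := by
  have hp : (p : ℂ) ≠ 0 := Nat.cast_ne_zero.mpr (Fact.out : p.Prime).ne_zero
  have h1 : (((m : ZMod p).val : ℤ) : ZMod p) = (m : ZMod p) := by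
    simp [ZMod.natCast_val, ZMod.cast_id]
  have h2 : (p : ℤ) ∣ m - ((m : ZMod p).val : ℤ) := by
    rw [← ZMod.intCast_zmod_eq_zero_iff_dvd, Int.cast_sub, h1, sub_self]
  obtain ⟨k, hk⟩ := h2
  have : (m : ℂ) / p = (((m : ZMod p).val : ℂ)) / p + (k : ℤ) := by
    have : (m : ℂ) = ((m : ZMod p).val : ℂ) + p * k := by
      have := congrArg (fun z : ℤ => (z : ℂ)) hk
      push_cast at this ⊢
      linear_combination this
    rw [this]; field_simp
  rw [this, eC_add, eC_int, mul_one, fch]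

lemma fch_add (x y : ZMod p) : fch p (x + y) = fch p x * fch p y := by
  have hx : eC ((x.val : ℂ) / p) = fch p x := rfl
  have hy : eC ((y.val : ℂ) / p) = fch p y := rfl
  have h1 : fch p (x + y) = eC (((x.val + y.val : ℤ) : ℂ) / p) := by
    rw [fch_int]
    congr 1
    push_cast [ZMod.natCast_val, ZMod.cast_id]
    ring
  rw [h1, show (((x.val + y.val : ℤ) : ℂ)) / p = (x.val : ℂ)/p + (y.val : ℂ)/p by push_cast; ring,
    eC_add, hx, hy]

lemma fch_zero : fch p 0 = 1 := by
  simp [fch, eC, ZMod.val_zero]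


lemma fch_ne_one {x : ZMod p} (hx : x ≠ 0) : fch p x ≠ 1 := by
  have hplt : x.val < p := ZMod.val_lt x
  have hx0 : x.val ≠ 0 := fun h => hx (by rwa [← ZMod.val_eq_zero])
  intro h
  rw [fch, eC, Complex.exp_eq_one_iff] at h
  obtain ⟨n, hn⟩ := h
  have hπ : (2 * (Real.pi : ℂ) * Complex.I) ≠ 0 := by
    simp [Real.pi_ne_zero, Complex.I_ne_zero]
  have h2 : ((x.val : ℂ) / p) = n := mul_left_cancel₀ hπ (hn.trans (mul_comm _ _))
  have hp : (p : ℂ) ≠ 0 := Nat.cast_ne_zero.mpr (Fact.out : p.Prime).ne_zero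
  have h3 : (x.val : ℂ) = ((n * p : ℤ) : ℂ) := by
    rw [div_eq_iff hp] at h2; push_cast; exact_mod_cast h2
  have h4 : (x.val : ℤ) = n * p := by exact_mod_cast h3
  have h5 : (p : ℤ) ∣ (x.val : ℤ) := ⟨n, by linarith [h4]⟩
  have := Int.le_of_dvd (by exact_mod_cast Nat.pos_of_ne_zero hx0) h5
  omega

lemma fch_sum : ∑ x : ZMod p, fch p x = 0 := by
  have h1 : (1 : ZMod p) ≠ 0 := one_ne_zero
  have key : fch p 1 * ∑ x : ZMod p, fch p x = 1 * ∑ x : ZMod p, fch p x := by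
    rw [Finset.mul_sum, one_mul]
    refine Fintype.sum_equiv (Equiv.addRight (1 : ZMod p)) _ _ (fun x => ?_)
    simp [Equiv.coe_addRight, fch_add, mul_comm]
  by_contra hs
  exact fch_ne_one h1 (mul_right_cancel₀ hs key)

lemma fch_sum_mul {c : ZMod p} (hc : c ≠ 0) : ∑ x : ZMod p, fch p (c * x) = 0 := by
  rw [← fch_sum (p := p)]
  exact Fintype.sum_equiv (Equiv.mulLeft₀ c hc) _ _ (fun x => rfl)

lemma gauss_shift (w c : ZMod p) :
    ∑ β : ZMod p, fch p (w * β ^ 2 - 2 * w * c * β)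
      = fch p (-(w * c ^ 2)) * ∑ β : ZMod p, fch p (w * β ^ 2) := by
  rw [Finset.mul_sum]
  exact (Fintype.sum_equiv (Equiv.addRight c)
    (fun x : ZMod p => fch p (-(w * c ^ 2)) * fch p (w * x ^ 2))
    (fun β : ZMod p => fch p (w * β ^ 2 - 2 * w * c * β)) (fun x => by
      simp only [Equiv.coe_addRight]
      rw [show w * (x + c) ^ 2 - 2 * w * c * (x + c) = w * x ^ 2 + -(w * c ^ 2) from by ring,
        fch_add]
      ring)).symm

variable (p) in
/-- quadratic exponential sum. -/
def Gf (u : ZMod p) : ℂ := ∑ β : ZMod p, fch p (u * β ^ 2)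

lemma ringChar_ne_two (hp2 : p ≠ 2) : ringChar (ZMod p) ≠ 2 := by
  rw [ZMod.ringChar_zmod_n]; exact hp2

lemma Gf_eq (hp2 : p ≠ 2) {u : ZMod p} (hu : u ≠ 0) :
    Gf p u = ∑ s : ZMod p, ((quadraticChar (ZMod p) s : ℤ) : ℂ) * fch p (u * s) := by
  have hcount : ∀ s : ZMod p,
      ((1 : ℂ) + ((quadraticChar (ZMod p) s : ℤ) : ℂ))
        = ∑ β : ZMod p, if β ^ 2 = s then 1 else 0 := by
    intro s
    have h0 := quadraticChar_card_sqrts (ringChar_ne_two hp2) s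
    have h2 : (({x : ZMod p | x ^ 2 = s}.toFinset.card : ℂ))
        = ((quadraticChar (ZMod p) s : ℤ) : ℂ) + 1 := by exact_mod_cast h0
    have h3 : Finset.univ.filter (fun β : ZMod p => β ^ 2 = s)
        = {x : ZMod p | x ^ 2 = s}.toFinset := by
      ext x; simp
    have h4 : (∑ β : ZMod p, if β ^ 2 = s then (1 : ℂ) else 0)
        = (({x : ZMod p | x ^ 2 = s}.toFinset.card : ℂ)) := by
      simp only [Finset.sum_boole, h3]
    rw [h4, h2]
    ring
  have expand : ∑ s : ZMod p, ((1 : ℂ) + ((quadraticChar (ZMod p) s : ℤ) : ℂ)) * fch p (u * s)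
      = Gf p u := by
    simp_rw [hcount, Finset.sum_mul]
    rw [Finset.sum_comm]
    refine Finset.sum_congr rfl (fun β _ => ?_)
    simp [ite_mul]
  rw [← expand]
  simp_rw [add_mul, one_mul, Finset.sum_add_distrib, fch_sum_mul hu, zero_add]

lemma Gf_flip (hp2 : p ≠ 2) {u q : ZMod p} (hu : u ≠ 0)
    (hq : quadraticChar (ZMod p) q = -1) : Gf p (q * u) = -Gf p u := by
  have hq0 : q ≠ 0 := by
    intro h; rw [h] at hq; simp at hq
  have hqu : q * u ≠ 0 := mul_ne_zero hq0 hu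
  have hre := Equiv.sum_comp (Equiv.mulLeft₀ q hq0)
    (fun t : ZMod p => ((quadraticChar (ZMod p) t : ℤ) : ℂ) * fch p (u * t))
  simp only [Equiv.mulLeft₀_apply] at hre
  rw [Gf_eq hp2 hqu, Gf_eq hp2 hu, ← hre, ← Finset.sum_neg_distrib]
  refine Finset.sum_congr rfl (fun s _ => ?_)
  rw [show u * (q * s) = q * u * s from by ring,
    _root_.map_mul (quadraticChar (ZMod p)) q s, hq]
  push_cast
  ring


section Rep

variable {p : ℕ} [Fact p.Prime]
  (ρ : Matrix.SpecialLinearGroup (Fin 2) ℤ →* ((ZMod p → ℂ) ≃ₗ[ℂ] (ZMod p → ℂ)))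
  (c₀ : ℂ) (aZ : ZMod p)

lemma sum_bas (φ : ZMod p → ℂ) : ∑ β : ZMod p, φ β • bas β = φ := by
  funext x
  simp [bas, Finset.sum_apply, Pi.smul_apply, smul_eq_mul, mul_ite, Finset.sum_ite_eq]

lemma apply_eq (g : Matrix.SpecialLinearGroup (Fin 2) ℤ) (φ : ZMod p → ℂ) :
    ρ g φ = ∑ β : ZMod p, φ β • ρ g (bas β) := by
  conv_lhs => rw [← sum_bas φ]
  rw [map_sum]
  simp_rw [_root_.map_smul]

variable (hTf : ∀ γ : ZMod p, ρ ModularGroup.T (bas γ) = fch p (aZ * γ ^ 2) • bas γ)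
  (hSf : ∀ γ : ZMod p, ρ ModularGroup.S (bas γ)
    = c₀ • ∑ β : ZMod p, fch p (-(2 * aZ * γ * β)) • bas β)

include hTf in
lemma Tpow (z : ℕ) (γ : ZMod p) :
    ρ (ModularGroup.T ^ z) (bas γ) = fch p ((z : ZMod p) * aZ * γ ^ 2) • bas γ := by
  induction z with
  | zero =>
    rw [pow_zero, _root_.map_one]
    simp [fch_zero]
  | succ k ih =>
    rw [pow_succ, _root_.map_mul]
    have hmul : (ρ (ModularGroup.T ^ k) * ρ ModularGroup.T) (bas γ)
        = ρ (ModularGroup.T ^ k) (ρ ModularGroup.T (bas γ)) := rfl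
    rw [hmul, hTf, _root_.map_smul, ih, smul_smul, ← fch_add,
      show aZ * γ ^ 2 + (k : ZMod p) * aZ * γ ^ 2 = ((k + 1 : ℕ) : ZMod p) * aZ * γ ^ 2 from by
        push_cast; ring]

include hSf in
lemma SApp (φ : ZMod p → ℂ) :
    ρ ModularGroup.S φ = fun x : ZMod p => c₀ * ∑ β : ZMod p, φ β * fch p (-(2 * aZ * β * x)) := by
  rw [apply_eq ρ ModularGroup.S φ]
  simp_rw [hSf, sum_bas]
  funext x
  simp only [Finset.sum_apply, Pi.smul_apply, smul_eq_mul]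
  rw [Finset.mul_sum]
  exact Finset.sum_congr rfl (fun β _ => by ring)

include hTf in
lemma TpowApp (z : ℕ) (φ : ZMod p → ℂ) :
    ρ (ModularGroup.T ^ z) φ = fun x : ZMod p => fch p ((z : ZMod p) * aZ * x ^ 2) * φ x := by
  rw [apply_eq ρ _ φ]
  simp_rw [Tpow ρ aZ hTf z, smul_smul]
  rw [sum_bas]
  funext x
  ring

include hTf hSf in
lemma key (hp2 : p ≠ 2) (h2 : (2 : ZMod p) ≠ 0) (ha : aZ ≠ 0) (z y : ℕ)
    (hyz : (y : ZMod p) * (z : ZMod p) = 1) :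
    ρ (ModularGroup.S * ModularGroup.T ^ y * ModularGroup.S * ModularGroup.T ^ z
        * ModularGroup.S) (bas 0)
      = (c₀ ^ 3 * p * Gf p ((z : ZMod p) * aZ)) • bas (0 : ZMod p) := by
  have hz0 : ((z : ZMod p)) ≠ 0 := by
    intro h; rw [h, mul_zero] at hyz; exact one_ne_zero hyz.symm
  have hy : ((y : ZMod p)) = ((z : ZMod p))⁻¹ := eq_inv_of_mul_eq_one_left hyz
  have hzz : ((z : ZMod p)) * ((z : ZMod p))⁻¹ = 1 := mul_inv_cancel₀ hz0
  set G : ℂ := Gf p ((z : ZMod p) * aZ) with hG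
  have step1 : ρ ModularGroup.S (bas (0 : ZMod p)) = c₀ • (fun _ : ZMod p => (1 : ℂ)) := by
    rw [hSf 0]
    congr 1
    have h1 : ∀ β : ZMod p, fch p (-(2 * aZ * 0 * β)) = (fun _ : ZMod p => (1:ℂ)) β := by
      intro β; simp [fch_zero]
    simp_rw [h1]
    exact sum_bas _
  have step2 : ρ (ModularGroup.T ^ z) (c₀ • (fun _ : ZMod p => (1 : ℂ)))
      = c₀ • (fun x : ZMod p => fch p ((z : ZMod p) * aZ * x ^ 2)) := by
    rw [_root_.map_smul, TpowApp ρ aZ hTf z]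
    congr 1
    funext x
    rw [mul_one]
  have step3 : ρ ModularGroup.S (c₀ • (fun x : ZMod p => fch p ((z : ZMod p) * aZ * x ^ 2)))
      = (c₀ * c₀) • (fun x : ZMod p =>
          fch p (-(aZ * ((z : ZMod p))⁻¹ * x ^ 2)) * G) := by
    rw [_root_.map_smul, SApp ρ c₀ aZ hSf]
    funext x
    simp only [Pi.smul_apply, smul_eq_mul]
    have hsum : ∑ β : ZMod p, fch p ((z : ZMod p) * aZ * β ^ 2) * fch p (-(2 * aZ * β * x))
        = fch p (-(aZ * ((z : ZMod p))⁻¹ * x ^ 2)) * G := by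
      have h1 : ∀ β : ZMod p, fch p ((z : ZMod p) * aZ * β ^ 2) * fch p (-(2 * aZ * β * x))
          = fch p (((z : ZMod p) * aZ) * β ^ 2
              - 2 * ((z : ZMod p) * aZ) * (((z : ZMod p))⁻¹ * x) * β) := by
        intro β
        rw [← fch_add]
        congr 1
        have : 2 * ((z : ZMod p) * aZ) * (((z : ZMod p))⁻¹ * x) * β
            = 2 * (((z : ZMod p)) * ((z : ZMod p))⁻¹) * aZ * x * β := by ring
        rw [sub_eq_add_neg, this, hzz]
        ring
      simp_rw [h1]
      rw [gauss_shift]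
      rw [hG, Gf]
      congr 2
      have : ((z : ZMod p) * aZ) * (((z : ZMod p))⁻¹ * x) ^ 2
          = (((z : ZMod p)) * ((z : ZMod p))⁻¹) * (aZ * ((z : ZMod p))⁻¹ * x ^ 2) := by ring
      rw [this, hzz, one_mul]
    rw [hsum]
    ring
  have step4 : ρ (ModularGroup.T ^ y) ((c₀ * c₀) • (fun x : ZMod p =>
        fch p (-(aZ * ((z : ZMod p))⁻¹ * x ^ 2)) * G))
      = (c₀ * c₀ * G) • (fun _ : ZMod p => (1 : ℂ)) := by
    rw [_root_.map_smul, TpowApp ρ aZ hTf y]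
    funext x
    simp only [Pi.smul_apply, smul_eq_mul]
    have h1 : fch p ((y : ZMod p) * aZ * x ^ 2) * fch p (-(aZ * ((z : ZMod p))⁻¹ * x ^ 2)) = 1 := by
      rw [← fch_add, hy,
        show ((z : ZMod p))⁻¹ * aZ * x ^ 2 + -(aZ * ((z : ZMod p))⁻¹ * x ^ 2) = 0 from by ring,
        fch_zero]
    linear_combination (c₀ * c₀ * G) * h1
  have step5 : ρ ModularGroup.S ((c₀ * c₀ * G) • (fun _ : ZMod p => (1 : ℂ)))
      = (c₀ * c₀ * G) • ((c₀ * (p : ℂ)) • bas (0 : ZMod p)) := by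
    rw [_root_.map_smul, SApp ρ c₀ aZ hSf]
    congr 1
    funext x
    simp only [Pi.smul_apply, smul_eq_mul, one_mul]
    by_cases hx : x = 0
    · subst hx
      have h1 : ∀ β : ZMod p, fch p (-(2 * aZ * β * 0)) = 1 := by
        intro β; simp [fch_zero]
      simp_rw [h1]
      simp [bas, Finset.card_univ, ZMod.card]
    · have h2x : (-(2 * aZ * x)) ≠ 0 := by
        simp only [neg_ne_zero]
        exact mul_ne_zero (mul_ne_zero h2 ha) hx
      have h1 : ∀ β : ZMod p, fch p (-(2 * aZ * β * x)) = fch p ((-(2 * aZ * x)) * β) := by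
        intro β; congr 1; ring
      simp_rw [h1]
      rw [fch_sum_mul h2x]
      simp [bas, hx]
  have hsplit : ρ (ModularGroup.S * ModularGroup.T ^ y * ModularGroup.S * ModularGroup.T ^ z
        * ModularGroup.S) (bas (0 : ZMod p))
      = ρ ModularGroup.S (ρ (ModularGroup.T ^ y) (ρ ModularGroup.S (ρ (ModularGroup.T ^ z)
          (ρ ModularGroup.S (bas (0 : ZMod p)))))) := by
    simp only [_root_.map_mul]
    rfl
  rw [hsplit, step1, step2, step3, step4, step5, smul_smul]
  congr 1
  ring

end Rep

end Stmt6Aux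

/-- for an odd prime `p` and `a` coprime to `p`, the space of
`Γ₀(pⁿ)`-invariant vectors of the Weil representation `ℂ L_p(a)` is zero for every `n ≥ 0`. -/
theorem stmt6 (p : ℕ) [hp : Fact p.Prime] (hp2 : Odd p) (a : ℤ) (ha : IsCoprime a p)
    (ρ : SL(2, ℤ) →* ((ZMod p → ℂ) ≃ₗ[ℂ] (ZMod p → ℂ)))
    (hT : ∀ γ : ZMod p, ρ ModularGroup.T (bas γ) =
      eC ((a : ℂ) * (γ.val : ℂ) ^ 2 / (p : ℂ)) • bas γ)
    (hS : ∀ γ : ZMod p, ρ ModularGroup.S (bas γ) =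
      ((sgOdd p 1 a)⁻¹ / Real.sqrt p) •
        ∑ β : ZMod p, eC (-(2 * (a : ℂ) * (γ.val : ℂ) * (β.val : ℂ)) / (p : ℂ)) • bas β) :
    ∀ n : ℕ, invariants ρ (Gamma0 (p ^ n)) = ⊥ := by
  intro n
  have hp2' : p ≠ 2 := by
    intro h
    rw [h] at hp2
    exact (by decide : ¬ Odd 2) hp2
  have ha' : (a : ZMod p) ≠ 0 := by
    intro h
    have hdvd : (p : ℤ) ∣ a := (ZMod.intCast_zmod_eq_zero_iff_dvd a p).mp h
    have hu : IsUnit (p : ℤ) := ha.isUnit_of_dvd' hdvd dvd_rfl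
    have h2le := hp.out.two_le
    rcases Int.isUnit_iff.mp hu with h1 | h1 <;> omega
  have h2Z : (2 : ZMod p) ≠ 0 := by
    have h22 : ((2 : ℕ) : ZMod p) ≠ 0 := by
      rw [Ne, ZMod.natCast_eq_zero_iff]
      intro hdvd
      exact hp2' ((Nat.prime_dvd_prime_iff_eq hp.out Nat.prime_two).mp hdvd)
    simpa using h22
  set cst : ℂ := ((sgOdd p 1 a)⁻¹ / Real.sqrt p) with hcst
  have hTf : ∀ γ : ZMod p, ρ ModularGroup.T (bas γ)
      = Stmt6Aux.fch p ((a : ZMod p) * γ ^ 2) • bas γ := by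
    intro γ
    rw [hT γ]
    congr 1
    rw [show (a : ℂ) * (γ.val : ℂ) ^ 2 / (p : ℂ)
        = (((a * (γ.val : ℤ) ^ 2 : ℤ)) : ℂ) / p from by push_cast; ring,
      Stmt6Aux.fch_int]
    congr 1
    push_cast [ZMod.natCast_val, ZMod.cast_id]
    ring
  have hSf : ∀ γ : ZMod p, ρ ModularGroup.S (bas γ)
      = cst • ∑ β : ZMod p, Stmt6Aux.fch p (-(2 * (a : ZMod p) * γ * β)) • bas β := by
    intro γ
    rw [hS γ]
    congr 1
    refine Finset.sum_congr rfl fun β _ => ?_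
    congr 1
    rw [show -(2 * (a : ℂ) * (γ.val : ℂ) * (β.val : ℂ)) / (p : ℂ)
        = (((-(2 * a * (γ.val : ℤ) * (β.val : ℤ)) : ℤ)) : ℂ) / p from by push_cast; ring,
      Stmt6Aux.fch_int]
    congr 1
    push_cast [ZMod.natCast_val, ZMod.cast_id]
    ring
  rw [Submodule.eq_bot_iff]
  intro v hvmem
  have hv : ∀ g ∈ Gamma0 (p ^ n), ρ g v = v := hvmem
  -- T-invariance: support at 0
  have hmemT : ModularGroup.T ∈ Gamma0 (p ^ n) := by
    rw [Gamma0_mem]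
    simp [ModularGroup.coe_T]
  have hTApp : ρ ModularGroup.T v
      = fun x : ZMod p => Stmt6Aux.fch p ((a : ZMod p) * x ^ 2) * v x := by
    have h1 := Stmt6Aux.TpowApp ρ (a : ZMod p) hTf 1 v
    rw [pow_one] at h1
    rw [h1]
    funext x
    norm_num
  have hsupp : ∀ x : ZMod p, x ≠ 0 → v x = 0 := by
    intro x hx
    have hx2 : (a : ZMod p) * x ^ 2 ≠ 0 := mul_ne_zero ha' (pow_ne_zero 2 hx)
    have heq := congrFun ((hTApp.symm).trans (hv ModularGroup.T hmemT)) x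
    by_contra hvx
    exact Stmt6Aux.fch_ne_one hx2 (mul_right_cancel₀ hvx (by simpa using heq))
  have hv0 : v = v 0 • bas (0 : ZMod p) := by
    funext x
    by_cases hx : x = 0
    · subst hx; simp [bas]
    · simp [bas, hx, hsupp x hx]
  -- a quadratic nonresidue and its inverse mod p^(n+1)
  obtain ⟨q₀, hq₀⟩ := quadraticChar_exists_neg_one (Stmt6Aux.ringChar_ne_two hp2')
  have hq0 : q₀ ≠ 0 := by
    intro h; rw [h] at hq₀; simp at hq₀
  set q : ℕ := q₀.val with hqdef
  have hqcast : ((q : ℕ) : ZMod p) = q₀ := by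
    simp [hqdef, ZMod.natCast_val, ZMod.cast_id]
  have hco : Nat.Coprime q (p ^ (n + 1)) := by
    apply Nat.Coprime.pow_right
    rw [Nat.coprime_comm]
    refine (Nat.Prime.coprime_iff_not_dvd hp.out).mpr fun hdvd => hq0 ?_
    rw [← hqcast]
    exact (ZMod.natCast_eq_zero_iff q p).mpr hdvd
  set yv : ℕ :=
    (((ZMod.unitOfCoprime q hco)⁻¹ : (ZMod (p ^ (n + 1)))ˣ) : ZMod (p ^ (n + 1))).val with hyvdef
  have hM : ((q : ZMod (p ^ (n + 1)))) * ((yv : ℕ) : ZMod (p ^ (n + 1))) = 1 := by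
    have h1 : ((yv : ℕ) : ZMod (p ^ (n + 1)))
        = (((ZMod.unitOfCoprime q hco)⁻¹ : (ZMod (p ^ (n + 1)))ˣ) : ZMod (p ^ (n + 1))) := by
      simp [hyvdef, ZMod.natCast_val, ZMod.cast_id]
    rw [h1,
      show ((q : ℕ) : ZMod (p ^ (n + 1)))
        = ((ZMod.unitOfCoprime q hco : (ZMod (p ^ (n + 1)))ˣ) : ZMod (p ^ (n + 1))) from
        (ZMod.coe_unitOfCoprime q hco).symm]
    exact_mod_cast Units.mul_inv (ZMod.unitOfCoprime q hco)
  have hMdvd : ((p : ℤ)) ^ (n + 1) ∣ ((q : ℤ) * yv - 1) := by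
    have h0 : (((q : ℤ) * yv - 1 : ℤ) : ZMod (p ^ (n + 1))) = 0 := by
      push_cast
      rw [show ((q : ℕ) : ZMod (p ^ (n + 1))) * ((yv : ℕ) : ZMod (p ^ (n + 1))) = 1 from hM]
      ring
    have h1 := (ZMod.intCast_zmod_eq_zero_iff_dvd _ (p ^ (n + 1))).mp h0
    exact_mod_cast h1
  have hdvd_n : ((p : ℤ)) ^ n ∣ ((yv : ℤ) * q - 1) := by
    refine dvd_trans (pow_dvd_pow _ (Nat.le_succ n)) ?_
    have h1 := hMdvd
    rwa [mul_comm ((q : ℤ)) ((yv : ℤ))] at h1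
  have hyq1 : ((yv : ℕ) : ZMod p) * ((q : ℕ) : ZMod p) = 1 := by
    have h1 : ((p : ℤ)) ∣ ((q : ℤ) * yv - 1) := by
      refine dvd_trans ?_ hMdvd
      simpa using pow_dvd_pow ((p : ℤ)) (Nat.one_le_iff_ne_zero.mpr (Nat.succ_ne_zero n))
    have h0 := (ZMod.intCast_zmod_eq_zero_iff_dvd _ p).mpr h1
    push_cast at h0
    linear_combination h0
  -- membership of the two words
  have hmem : ∀ zz yy : ℕ, ((p : ℤ)) ^ n ∣ ((yy : ℤ) * zz - 1) →
      (ModularGroup.S * ModularGroup.T ^ yy * ModularGroup.S * ModularGroup.T ^ zz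
        * ModularGroup.S) ∈ Gamma0 (p ^ n) := by
    intro zz yy hd
    rw [Gamma0_mem]
    have hTy : ((ModularGroup.T ^ yy : SL(2, ℤ)) : Matrix (Fin 2) (Fin 2) ℤ)
        = !![1, (yy : ℤ); 0, 1] := by
      rw [← zpow_natCast, ModularGroup.coe_T_zpow]
    have hTz : ((ModularGroup.T ^ zz : SL(2, ℤ)) : Matrix (Fin 2) (Fin 2) ℤ)
        = !![1, (zz : ℤ); 0, 1] := by
      rw [← zpow_natCast, ModularGroup.coe_T_zpow]
    have hent : ((ModularGroup.S * ModularGroup.T ^ yy * ModularGroup.S * ModularGroup.T ^ zz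
        * ModularGroup.S : SL(2, ℤ)) : Matrix (Fin 2) (Fin 2) ℤ) 1 0 = (yy : ℤ) * zz - 1 := by
      simp only [Matrix.SpecialLinearGroup.coe_mul, hTy, hTz, ModularGroup.coe_S,
        Matrix.mul_fin_two]
      norm_num
      ring
    rw [show ((ModularGroup.S * ModularGroup.T ^ yy * ModularGroup.S * ModularGroup.T ^ zz
        * ModularGroup.S : SL(2, ℤ)) : Matrix (Fin 2) (Fin 2) ℤ) 1 0 = (yy : ℤ) * zz - 1 from hent]
    rw [ZMod.intCast_zmod_eq_zero_iff_dvd]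
    exact_mod_cast hd
  have hmem1 := hmem 1 1 (by norm_num)
  have hmem2 := hmem q yv hdvd_n
  have key1 := Stmt6Aux.key ρ cst (a : ZMod p) hTf hSf hp2' h2Z ha' 1 1 (by norm_num)
  have key2 := Stmt6Aux.key ρ cst (a : ZMod p) hTf hSf hp2' h2Z ha' q yv hyq1
  set c : ℂ := v 0 with hc
  have eval : ∀ (g : SL(2, ℤ)) (K : ℂ), g ∈ Gamma0 (p ^ n) → ρ g (bas (0 : ZMod p)) = K • bas (0 : ZMod p) →
      c * K = c := by
    intro g K hg hK
    have h1 : c • (K • bas (0 : ZMod p)) = v := by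
      rw [← hK, ← _root_.map_smul, ← hv0]
      exact hv g hg
    have h2 := congrFun h1 0
    simpa [bas, mul_comm] using h2
  have e1 := eval _ _ hmem1 key1
  have e2 := eval _ _ hmem2 key2
  have hflip : Stmt6Aux.Gf p (((q : ℕ) : ZMod p) * (a : ZMod p))
      = - Stmt6Aux.Gf p ((a : ZMod p)) := by
    rw [hqcast]
    exact Stmt6Aux.Gf_flip hp2' ha' hq₀
  have hone : (((1 : ℕ) : ZMod p)) * (a : ZMod p) = (a : ZMod p) := by
    norm_num
  rw [hone] at e1
  rw [hflip] at e2
  have hc0 : c = 0 := by linear_combination (-(1:ℂ)/2) * e1 + (-(1:ℂ)/2) * e2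
  rw [hv0, hc0, zero_smul]
end
end

section
/- Let p be a prime, a₁, a₂ integers coprime to p, and 0 ≤ k₁ ≤ k₂ ≤ k₃ integers. If p is odd, then the Γ₀(p^{k₃})-invariants of ℂL_{p^{k₁}}(a₁) ⊗ ℂL_{p^{k₂}}(a₂) coincide with the Γ₀(p^{k₂})-invariants: any vector invariant under Γ₀(p^{k₂}) is automatically invariant under all of Γ₀(p^{k₃}) acting on this space. -/
/-!
The level of the Weil representation is `p ^ k₂`: `T` acts diagonally by `p ^ k₂`-th roots of
unity, so `T ^ (p ^ k₂)`, and hence every conjugate `S⁻¹ T ^ m S` with `p ^ k₂ ∣ m`, acts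
trivially. This makes `Γ₀(p ^ k₂)` the product of `Γ₀(p ^ k₃)` and the kernel: for
`g = (a b; c d) ∈ Γ₀(p ^ k₂)`, right multiplication by a suitable `T ^ n` with `p ^ k₂ ∣ n`
makes `d` prime to `p`, and then `S⁻¹ T ^ (c x) S`, where `x d ≡ 1 mod p ^ k₃`, kills the
lower-left entry modulo `p ^ k₃`.
-/

open Complex Matrix MatrixGroups CongruenceSubgroup ModularGroup

noncomputable section

section Invariants

variable {V : Type*} [AddCommGroup V] [Module ℂ V] (ρ : SL(2, ℤ) →* (V ≃ₗ[ℂ] V))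

theorem invariants_antitone : Antitone (invariants ρ) :=
  fun _ _ h _ hv g hg => hv g (h hg)

theorem mem_invariants_iff_le_comap_stabilizer (Γ : Subgroup SL(2, ℤ)) (v : V) :
    v ∈ invariants ρ Γ ↔ Γ ≤ (MulAction.stabilizer (V ≃ₗ[ℂ] V) v).comap ρ :=
  Iff.rfl

theorem invariants_sup_ker (Γ : Subgroup SL(2, ℤ)) :
    invariants ρ (Γ ⊔ ρ.ker) = invariants ρ Γ := by
  refine le_antisymm (invariants_antitone ρ le_sup_left) fun v hv => ?_
  rw [mem_invariants_iff_le_comap_stabilizer] at hv ⊢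
  exact sup_le hv (ρ.ker_le_comap _)

end Invariants

theorem Gamma0_le_Gamma0_of_dvd {M N : ℕ} (h : M ∣ N) : Gamma0 N ≤ Gamma0 M := by
  intro g hg
  rw [Gamma0_mem, ZMod.intCast_zmod_eq_zero_iff_dvd] at hg ⊢
  exact (Int.natCast_dvd_natCast.mpr h).trans hg

theorem mul_T_zpow_mul_conj_T_zpow_apply_one_zero (g : SL(2, ℤ)) (n m : ℤ) :
    (g * T ^ n * (S⁻¹ * T ^ m * S)) 1 0 = g 1 0 - (g 1 0 * n + g 1 1) * m := by
  simp [Matrix.SpecialLinearGroup.coe_mul, coe_T_zpow, Matrix.mul_apply, Fin.sum_univ_two]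
  ring

theorem exists_dvd_isCoprime_mul_add {p : ℤ} (hp : Prime p) {k : ℕ} {c d : ℤ}
    (hcd : IsCoprime c d) (hc : p ^ k ∣ c) : ∃ n, p ^ k ∣ n ∧ IsCoprime (c * n + d) p := by
  by_cases hd : p ∣ d
  · have hpc : ¬ p ∣ c := fun h => hp.not_isUnit (hcd.isUnit_of_dvd' h hd)
    have hk : k = 0 := by
      by_contra hk
      exact hpc ((dvd_pow_self p hk).trans hc)
    refine ⟨1, by simp [hk], (hp.coprime_iff_not_dvd.mpr fun h => hpc ?_).symm⟩
    simpa using dvd_sub h hd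
  · exact ⟨0, dvd_zero _, by simpa using (hp.coprime_iff_not_dvd.mpr hd).symm⟩

theorem Gamma0_le_Gamma0_sup_ker {G : Type*} [Group G] (ρ : SL(2, ℤ) →* G) {p : ℕ}
    (hp : p.Prime) (k l : ℕ) (hT : ρ (T ^ p ^ k) = 1) :
    Gamma0 (p ^ k) ≤ Gamma0 (p ^ l) ⊔ ρ.ker := by
  have hTker : ∀ n : ℤ, (p : ℤ) ^ k ∣ n → T ^ n ∈ ρ.ker := by
    rintro _ ⟨q, rfl⟩
    rw [_root_.zpow_mul, MonoidHom.mem_ker, map_zpow]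
    exact_mod_cast (by rw [hT, _root_.one_zpow] : ρ (T ^ p ^ k) ^ q = 1)
  intro g hg
  have hdet : g 0 0 * g 1 1 - g 0 1 * g 1 0 = 1 := by
    rw [← Matrix.det_fin_two]
    exact g.det_coe
  have hc : (p : ℤ) ^ k ∣ g 1 0 := by
    exact_mod_cast (ZMod.intCast_zmod_eq_zero_iff_dvd _ _).mp (Gamma0_mem.mp hg)
  obtain ⟨n, hn, hcop⟩ := exists_dvd_isCoprime_mul_add (Nat.prime_iff_prime_int.mp hp)
    (c := g 1 0) (d := g 1 1) ⟨-g 0 1, g 0 0, by linarith⟩ hc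
  obtain ⟨x, y, hxy⟩ := hcop.pow_right (n := l)
  have hw : S⁻¹ * T ^ (g 1 0 * x) * S ∈ ρ.ker :=
    ρ.normal_ker.conj_mem' _ (hTker _ (hc.mul_right x)) _
  have hh : g * T ^ n * (S⁻¹ * T ^ (g 1 0 * x) * S) ∈ Gamma0 (p ^ l) := by
    rw [Gamma0_mem, mul_T_zpow_mul_conj_T_zpow_apply_one_zero, ZMod.intCast_zmod_eq_zero_iff_dvd]
    exact ⟨g 1 0 * y, by push_cast; linear_combination -g 1 0 * hxy⟩
  rw [← mul_inv_cancel_right g (T ^ n * (S⁻¹ * T ^ (g 1 0 * x) * S)), ← mul_assoc]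
  exact Subgroup.mul_mem_sup hh (ρ.ker.inv_mem (ρ.ker.mul_mem (hTker n hn) hw))

theorem eC_pow_eq_one {n : ℕ} {x : ℂ} {z : ℤ} (h : n * x = z) : eC x ^ n = 1 := by
  rw [eC, ← Complex.exp_nat_mul, ← Complex.exp_int_mul_two_pi_mul_I z, ← h]
  ring_nf

theorem pow_eq_one_of_apply_bas_eq_smul {α : Type*} [Finite α] [DecidableEq α]
    (f : (α → ℂ) ≃ₗ[ℂ] (α → ℂ)) (c : α → ℂ) (hf : ∀ γ, f (bas γ) = c γ • bas γ) {n : ℕ}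
    (hn : ∀ γ, c γ ^ n = 1) : f ^ n = 1 := by
  have hbas : ∀ γ, bas γ = Pi.basisFun ℂ α γ := fun γ => by
    ext x
    simp [bas, Pi.single_apply]
  have hpow : ∀ m : ℕ, ∀ γ, (f ^ m) (bas γ) = c γ ^ m • bas γ := by
    intro m γ
    induction m with
    | zero => simp
    | succ m ih => rw [pow_succ', LinearEquiv.mul_apply, ih, map_smul, hf, smul_smul, pow_succ]
  refine (Pi.basisFun ℂ α).ext' fun γ => ?_
  rw [← hbas, hpow, hn, one_smul]
  rfl

theorem natCast_pow_mul_div_pow {k₁ k₂ : ℕ} (h : k₁ ≤ k₂) (p : ℕ) (hp : p ≠ 0) (x : ℂ) :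
    ((p ^ k₂ : ℕ) : ℂ) * (x / (p : ℂ) ^ k₁) = x * ((p ^ (k₂ - k₁) : ℕ) : ℂ) := by
  have hp' : (p : ℂ) ^ k₁ ≠ 0 := pow_ne_zero _ (Nat.cast_ne_zero.mpr hp)
  push_cast
  rw [← pow_mul_pow_sub (p : ℂ) h]
  field_simp

theorem stmt10_general (p : ℕ) [hp : Fact p.Prime] (a₁ a₂ : ℤ)
    (k₁ k₂ k₃ : ℕ) (h₁₂ : k₁ ≤ k₂) (h₂₃ : k₂ ≤ k₃)
    (ρ : SL(2, ℤ) →*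
      ((ZMod (p ^ k₁) × ZMod (p ^ k₂) → ℂ) ≃ₗ[ℂ] (ZMod (p ^ k₁) × ZMod (p ^ k₂) → ℂ)))
    (hT : ∀ γ : ZMod (p ^ k₁) × ZMod (p ^ k₂), ρ ModularGroup.T (bas γ) =
      eC ((a₁ : ℂ) * (γ.1.val : ℂ) ^ 2 / (p : ℂ) ^ k₁ +
          (a₂ : ℂ) * (γ.2.val : ℂ) ^ 2 / (p : ℂ) ^ k₂) • bas γ) :
    invariants ρ (Gamma0 (p ^ k₃)) = invariants ρ (Gamma0 (p ^ k₂)) := by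
  have hTp : ρ (T ^ p ^ k₂) = 1 := by
    rw [map_pow]
    refine pow_eq_one_of_apply_bas_eq_smul _ _ hT fun γ => eC_pow_eq_one
      (z := a₁ * γ.1.val ^ 2 * (p ^ (k₂ - k₁) : ℕ) + a₂ * γ.2.val ^ 2) ?_
    rw [mul_add, natCast_pow_mul_div_pow h₁₂ p hp.out.ne_zero,
      natCast_pow_mul_div_pow le_rfl p hp.out.ne_zero, Nat.sub_self]
    push_cast
    ring
  refine le_antisymm ?_ (invariants_antitone ρ (Gamma0_le_Gamma0_of_dvd (pow_dvd_pow p h₂₃)))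
  calc invariants ρ (Gamma0 (p ^ k₃)) = invariants ρ (Gamma0 (p ^ k₃) ⊔ ρ.ker) :=
        (invariants_sup_ker ρ _).symm
    _ ≤ invariants ρ (Gamma0 (p ^ k₂)) :=
        invariants_antitone ρ (Gamma0_le_Gamma0_sup_ker ρ hp.out k₂ k₃ hTp)

/-- for an odd prime `p`, integers `a₁, a₂` coprime to `p` and
`0 ≤ k₁ ≤ k₂ ≤ k₃`, the `Γ₀(p^{k₃})`-invariants of the tensor product Weil representation
`ℂ L_{p^{k₁}}(a₁) ⊗ ℂ L_{p^{k₂}}(a₂)` coincide with the `Γ₀(p^{k₂})`-invariants. -/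
theorem stmt10 (p : ℕ) [hp : Fact p.Prime] (hp2 : Odd p) (a₁ a₂ : ℤ)
    (ha₁ : IsCoprime a₁ (p : ℤ)) (ha₂ : IsCoprime a₂ (p : ℤ))
    (k₁ k₂ k₃ : ℕ) (h₁₂ : k₁ ≤ k₂) (h₂₃ : k₂ ≤ k₃)
    (ρ : SL(2, ℤ) →*
      ((ZMod (p ^ k₁) × ZMod (p ^ k₂) → ℂ) ≃ₗ[ℂ] (ZMod (p ^ k₁) × ZMod (p ^ k₂) → ℂ)))
    (hT : ∀ γ : ZMod (p ^ k₁) × ZMod (p ^ k₂), ρ ModularGroup.T (bas γ) =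
      eC ((a₁ : ℂ) * (γ.1.val : ℂ) ^ 2 / (p : ℂ) ^ k₁ +
          (a₂ : ℂ) * (γ.2.val : ℂ) ^ 2 / (p : ℂ) ^ k₂) • bas γ)
    (hS : ∀ γ : ZMod (p ^ k₁) × ZMod (p ^ k₂), ρ ModularGroup.S (bas γ) =
      ((sgOdd p k₁ a₁ * sgOdd p k₂ a₂)⁻¹ / Real.sqrt ((p : ℝ) ^ (k₁ + k₂))) •
        ∑ β : ZMod (p ^ k₁) × ZMod (p ^ k₂),
          eC (-(2 * (a₁ : ℂ) * (γ.1.val : ℂ) * (β.1.val : ℂ)) / (p : ℂ) ^ k₁ -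
              2 * (a₂ : ℂ) * (γ.2.val : ℂ) * (β.2.val : ℂ) / (p : ℂ) ^ k₂) • bas β) :
    invariants ρ (Gamma0 (p ^ k₃)) = invariants ρ (Gamma0 (p ^ k₂)) :=
  stmt10_general p (hp := hp) a₁ a₂ k₁ k₂ k₃ h₁₂ h₂₃ ρ hT
end
end
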